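/- Let H = (V, E) be a finite simple graph on n vertices, with one qubit per vertex, let |H⟩ be the associated graph state, and let D ∈ F₂^V be the vector with D_b = 1 if and only if vertex b has even degree in H. Then for every z ∈ F₂^V there exists a complex phase c with c = i^n or c = −i^n such that σ_y^{⊗n} σ_z^z |H⟩ = c · σ_z^{z + D} |H⟩, where the addition z + D is componentwise modulo 2. -/

import Mathlib

open scoped BigOperators ComplexConjugate ComplexOrder

noncomputable section

namespace QIpaper

/-- Inner product `⟨ψ|φ⟩`, conjugate-linear in the first argument. -/
def braket {I : Type*} [Fintype I] (ψ φ : I → ℂ) : ℂ := ∑ x, conj (ψ x) * φ x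

/-- Outer product `|ψ⟩⟨ψ|`. -/
def dm {I : Type*} (ψ : I → ℂ) : Matrix I I ℂ := Matrix.of fun x y => ψ x * conj (ψ y)

open Classical in
/-- Positive semidefinite square root (junk value `0` on non-PSD matrices). -/
def psdSqrt {I : Type*} [Fintype I] [DecidableEq I] (A : Matrix I I ℂ) : Matrix I I ℂ :=
  if h : A.PosSemidef then
    (h.1.eigenvectorUnitary : Matrix I I ℂ) *
      Matrix.diagonal ((↑) ∘ (fun x : ℝ => Real.sqrt x) ∘ h.1.eigenvalues) *
      (star (h.1.eigenvectorUnitary : Matrix I I ℂ))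
  else 0

/-- The trace norm `‖A‖₁ = tr √(AᴴA)`. -/
def traceNorm {I : Type*} [Fintype I] [DecidableEq I] (A : Matrix I I ℂ) : ℝ :=
  (psdSqrt (A.conjTranspose * A)).trace.re

/-- Fidelity `F(ρ,σ) = tr √(√ρ σ √ρ)`. -/
def fidelity {I : Type*} [Fintype I] [DecidableEq I] (ρ σ : Matrix I I ℂ) : ℝ :=
  (psdSqrt (psdSqrt ρ * σ * psdSqrt ρ)).trace.re

/-- Purity `tr(ρ²)`. -/
def purity {I : Type*} [Fintype I] (ρ : Matrix I I ℂ) : ℝ := ((ρ * ρ).trace).re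

def sigmaX : Matrix (Fin 2) (Fin 2) ℂ := !![0, 1; 1, 0]
def sigmaY : Matrix (Fin 2) (Fin 2) ℂ := !![0, -Complex.I; Complex.I, 0]
def sigmaZ : Matrix (Fin 2) (Fin 2) ℂ := !![1, 0; 0, -1]

/-- `σ_y^{⊗I}` on the qubits indexed by `I`. -/
def sigmaYn {I : Type*} [Fintype I] [DecidableEq I] : Matrix (I → Fin 2) (I → Fin 2) ℂ :=
  Matrix.of fun x y => ∏ k, sigmaY (x k) (y k)

/-- The `n`-tangle `τ(ψ) = |⟨ψ|σ_y^{⊗n}|ψ*⟩|`. -/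
def tangle {I : Type*} [Fintype I] [DecidableEq I] (ψ : (I → Fin 2) → ℂ) : ℝ :=
  ‖(∑ x, ∑ y, conj (ψ x) * sigmaYn x y * conj (ψ y))‖

/-- Entrywise complex conjugate of a matrix. -/
def conjM {I J : Type*} (ρ : Matrix I J ℂ) : Matrix I J ℂ := Matrix.of fun x y => conj (ρ x y)

/-- `ρ̃ = σ_y^{⊗n} ρ* σ_y^{⊗n}`. -/
def tildeM {I : Type*} [Fintype I] [DecidableEq I] (ρ : Matrix (I → Fin 2) (I → Fin 2) ℂ) :
    Matrix (I → Fin 2) (I → Fin 2) ℂ := sigmaYn * conjM ρ * sigmaYn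

/-- The Wootters tilde `|ψ̃⟩ = σ_y^{⊗n}|ψ*⟩`. -/
def wtilde {I : Type*} [Fintype I] [DecidableEq I] (ψ : (I → Fin 2) → ℂ) : (I → Fin 2) → ℂ :=
  sigmaYn.mulVec (fun x => conj (ψ x))

/-- Reduced density matrix of the pure state `ψ` on the qubits in `s`
(tracing out the complement). -/
def reduced {n : ℕ} (s : Finset (Fin n)) (ψ : (Fin n → Fin 2) → ℂ) :
    Matrix ({i : Fin n // i ∈ s} → Fin 2) ({i : Fin n // i ∈ s} → Fin 2) ℂ :=
  Matrix.of fun a b => ∑ c : {i : Fin n // i ∉ s} → Fin 2,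
    ψ (fun i => if h : i ∈ s then a ⟨i, h⟩ else c ⟨i, h⟩) *
    conj (ψ (fun i => if h : i ∈ s then b ⟨i, h⟩ else c ⟨i, h⟩))

/-- GME-concurrence `C_GME(ψ) = min_{∅ ⊊ γ ⊊ [n]} √(2(1 − tr ψ_γ²))`. -/
def gme {n : ℕ} (ψ : (Fin n → Fin 2) → ℂ) : ℝ :=
  sInf {r : ℝ | ∃ γ : Finset (Fin n), γ ≠ ∅ ∧ γ ≠ Finset.univ ∧
    r = Real.sqrt (2 * (1 - purity (reduced γ ψ)))}

/-- Concentratable entanglement `C(ψ; s) = 1 − 2^{−|s|} Σ_{γ⊆s} tr(ψ_γ²)`. -/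
def CE {n : ℕ} (ψ : (Fin n → Fin 2) → ℂ) (s : Finset (Fin n)) : ℝ :=
  1 - (1 / 2 ^ s.card) * ∑ γ ∈ s.powerset, purity (reduced γ ψ)

/-- The subnormalized post-measurement vector `(⟨v|⊗I)|Ψ⟩`. -/
def contract {IA IB : Type*} [Fintype IA] (v : IA → ℂ) (Ψ : IA × IB → ℂ) : IB → ℂ :=
  fun y => ∑ x, conj (v x) * Ψ (x, y)

/-- Probability `p_v = ⟨Ψ|(|v⟩⟨v| ⊗ I)|Ψ⟩` of outcome `v`. -/
def prob {IA IB : Type*} [Fintype IA] [Fintype IB] (v : IA → ℂ) (Ψ : IA × IB → ℂ) : ℝ :=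
  (braket (contract v Ψ) (contract v Ψ)).re

/-- Normalized post-measurement state (the zero vector when the probability vanishes). -/
def postState {IA IB : Type*} [Fintype IA] [Fintype IB] (v : IA → ℂ) (Ψ : IA × IB → ℂ) :
    IB → ℂ := fun y => ((Real.sqrt (prob v Ψ) : ℂ))⁻¹ * contract v Ψ y

/-- `b` is an orthonormal family. (An orthonormal family indexed by the space's own
index type is an orthonormal basis.) -/
def ONB {J I : Type*} [Fintype I] [DecidableEq J] (b : J → I → ℂ) : Prop :=
  ∀ i j, braket (b i) (b j) = if i = j then 1 else 0

/-- Average post-measurement entanglement `Ē_β(Ψ) = Σ_i p_i E(φ_i)`. -/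
def avgE {ι IA IB : Type*} [Fintype ι] [Fintype IA] [Fintype IB]
    (E : (IB → ℂ) → ℝ) (b : ι → IA → ℂ) (Ψ : IA × IB → ℂ) : ℝ :=
  ∑ i, prob (b i) Ψ * E (postState (b i) Ψ)

/-- Multipartite entanglement of assistance: supremum of `Ē_β` over all
orthonormal bases `β` of `H_A`. -/
def Lglobal {IA IB : Type*} [Fintype IA] [Fintype IB] [DecidableEq IA]
    (E : (IB → ℂ) → ℝ) (Ψ : IA × IB → ℂ) : ℝ :=
  sSup {r : ℝ | ∃ b : IA → IA → ℂ, ONB b ∧ r = avgE E b Ψ}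

/-- Tensor-product basis of `(ℂ²)^{⊗K}` built from single-qubit bases. -/
def productBasis {K : Type*} [Fintype K] (q : K → Fin 2 → Fin 2 → ℂ) :
    (K → Fin 2) → (K → Fin 2) → ℂ :=
  fun i x => ∏ k, q k (i k) (x k)

/-- Localizable multipartite entanglement: supremum of `Ē_β` over product bases of
single-qubit orthonormal bases of `H_A = (ℂ²)^{⊗K}`. -/
def Lloc {K IB : Type*} [Fintype K] [DecidableEq K] [Fintype IB]
    (E : (IB → ℂ) → ℝ) (Ψ : (K → Fin 2) × IB → ℂ) : ℝ :=
  sSup {r : ℝ | ∃ q : K → Fin 2 → Fin 2 → ℂ, (∀ k, ONB (q k)) ∧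
    r = avgE E (productBasis q) Ψ}

/-- Partial trace over the `A` system of `|Ψ⟩⟨Ψ|`. -/
def ptraceA {IA IB : Type*} [Fintype IA] (Ψ : IA × IB → ℂ) : Matrix IB IB ℂ :=
  Matrix.of fun y y' => ∑ x, Ψ (x, y) * conj (Ψ (x, y'))

/-- Reduced density matrix of `|Ψ⟩⟨Ψ|` on the subset `s` of the `B` qubits. -/
def reducedB {IA : Type*} [Fintype IA] {n : ℕ} (s : Finset (Fin n))
    (Ψ : IA × (Fin n → Fin 2) → ℂ) :
    Matrix ({i : Fin n // i ∈ s} → Fin 2) ({i : Fin n // i ∈ s} → Fin 2) ℂ :=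
  Matrix.of fun a b => ∑ x : IA, ∑ c : {i : Fin n // i ∉ s} → Fin 2,
    Ψ (x, fun i => if h : i ∈ s then a ⟨i, h⟩ else c ⟨i, h⟩) *
    conj (Ψ (x, fun i => if h : i ∈ s then b ⟨i, h⟩ else c ⟨i, h⟩))


/-- The `±1` sign contributed by a controlled-Z gate on the (unordered) pair `e` of qubits,
evaluated at the computational basis state `x`. -/
def czSign {n : ℕ} (x : Fin n → Fin 2) : Sym2 (Fin n) → ℂ :=
  Sym2.lift ⟨fun a b => if x a = 1 ∧ x b = 1 then (-1 : ℂ) else 1, by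
    intro a b; simp [and_comm]⟩

/-- The graph state `|G⟩ = (Π_{{a,b}∈E} CZ_{ab}) |+⟩^{⊗n}` of a simple graph `G` on `n`
vertices, written out in the computational basis. -/
def graphState {n : ℕ} (G : SimpleGraph (Fin n)) [DecidableRel G.Adj] :
    (Fin n → Fin 2) → ℂ :=
  fun x => (Real.sqrt (2 ^ n) : ℂ)⁻¹ * ∏ e ∈ G.edgeFinset, czSign x e

/-- The sign of the Pauli string `σ_z^z` at the computational basis state `x`,
i.e. `σ_z^z |x⟩ = zSign z x • |x⟩`. -/
def zSign {n : ℕ} (z x : Fin n → Fin 2) : ℂ :=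
  ∏ b, if z b = 1 ∧ x b = 1 then (-1 : ℂ) else 1

/-- The vector `σ_z^z ψ`, where `σ_z` is applied to every qubit `b` with `z b = 1`. -/
def sigmaZvec {n : ℕ} (z : Fin n → Fin 2) (ψ : (Fin n → Fin 2) → ℂ) :
    (Fin n → Fin 2) → ℂ :=
  fun x => zSign z x * ψ x

/-!
Since `σ_y = i σ_x σ_z`, we have `σ_y^{⊗n} = iⁿ σ_x^{⊗n} σ_z^{⊗n}`, and `σ_x^{⊗n}` commutes with
every `σ_z^w` up to the sign `(-1)^{|w|}`. Flipping all qubits of `|H⟩` multiplies each edge phase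
`(-1)^{x_a x_b}` by `-(-1)^{x_a + x_b}`; by the handshake count this gives
`σ_x^{⊗n} |H⟩ = ±σ_z^o |H⟩`, with `o` the indicator of the odd-degree vertices. As `1 + o = D`,
the three Pauli strings `σ_z^{⊗n}`, `σ_z^z`, `σ_z^o` combine into `σ_z^{z + D}`.
-/

theorem prod_edgeFinset_eq_prod_pow_degree {V M : Type*} [Fintype V] [DecidableEq V]
    [CommMonoid M] (G : SimpleGraph V) [DecidableRel G.Adj] (g : Sym2 V → M) (f : V → M)
    (hg : ∀ a b, G.Adj a b → g s(a, b) = f a * f b) :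
    ∏ e ∈ G.edgeFinset, g e = ∏ v, f v ^ G.degree v := by
  have h_edge : ∏ e ∈ G.edgeFinset, g e = ∏ d : G.Dart, f d.fst := by
    rw [← Finset.prod_fiberwise_of_maps_to (g := SimpleGraph.Dart.edge)
      (fun d _ => SimpleGraph.mem_edgeFinset.mpr d.edge_mem)]
    refine Finset.prod_congr rfl fun e he => ?_
    induction e with
    | _ a b =>
      let d : G.Dart := ⟨(a, b), SimpleGraph.mem_edgeFinset.mp he⟩
      rw [show s(a, b) = d.edge from rfl, d.edge_fiber, Finset.prod_pair d.symm_ne.symm]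
      exact hg a b d.adj
  rw [h_edge, ← Finset.prod_fiberwise_of_maps_to (g := fun d : G.Dart => d.fst)
    (fun d _ => Finset.mem_univ _)]
  refine Finset.prod_congr rfl fun v _ => ?_
  rw [Finset.prod_congr rfl fun d hd => congrArg f (Finset.mem_filter.mp hd).2,
    Finset.prod_const, G.dart_fst_fiber_card_eq_degree]

def czPhase (u v : Fin 2) : ℂ := if u = 1 ∧ v = 1 then -1 else 1

lemma czPhase_comm (u v : Fin 2) : czPhase u v = czPhase v u := by
  simp only [czPhase, and_comm]

lemma czPhase_add_right (u v w : Fin 2) : czPhase u (v + w) = czPhase u v * czPhase u w := by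
  fin_cases u <;> fin_cases v <;> fin_cases w <;> norm_num [czPhase]

lemma czPhase_add_left (u v w : Fin 2) : czPhase (u + v) w = czPhase u w * czPhase v w := by
  simp only [czPhase_comm _ w, czPhase_add_right]

lemma czPhase_one_left_pow (d : ℕ) (v : Fin 2) :
    czPhase 1 v ^ d = czPhase (if Even d then 0 else 1) v := by
  by_cases hd : Even d
  · fin_cases v <;> simp [czPhase, hd, hd.neg_one_pow]
  · fin_cases v <;> simp [czPhase, hd, (Nat.not_even_iff_odd.mp hd).neg_one_pow]

lemma czPhase_add_one_add_one (u v : Fin 2) :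
    czPhase (u + 1) (v + 1) = -(czPhase 1 u * czPhase 1 v) * czPhase u v := by
  fin_cases u <;> fin_cases v <;> norm_num [czPhase]

lemma czPhase_eq_one_or_neg_one (u v : Fin 2) : czPhase u v = 1 ∨ czPhase u v = -1 := by
  unfold czPhase; split_ifs <;> simp

lemma czSign_mk {n : ℕ} (x : Fin n → Fin 2) (a b : Fin n) :
    czSign x s(a, b) = czPhase (x a) (x b) := rfl

lemma zSign_eq_prod_czPhase {n : ℕ} (z x : Fin n → Fin 2) :
    zSign z x = ∏ b, czPhase (z b) (x b) := rfl

lemma zSign_comm {n : ℕ} (z x : Fin n → Fin 2) : zSign z x = zSign x z := by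
  simp only [zSign_eq_prod_czPhase, czPhase_comm (z _)]

lemma zSign_add_left {n : ℕ} (z w x : Fin n → Fin 2) :
    zSign (z + w) x = zSign z x * zSign w x := by
  simp only [zSign_eq_prod_czPhase, Pi.add_apply, czPhase_add_left, Finset.prod_mul_distrib]

lemma zSign_add_right {n : ℕ} (z x y : Fin n → Fin 2) :
    zSign z (x + y) = zSign z x * zSign z y := by
  simp only [zSign_comm z, zSign_add_left]

lemma zSign_eq_one_or_neg_one {n : ℕ} (z x : Fin n → Fin 2) : zSign z x = 1 ∨ zSign z x = -1 :=
  Finset.prod_induction _ (fun s => s = 1 ∨ s = -1)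
    (by rintro _ _ (rfl | rfl) (rfl | rfl) <;> norm_num) (Or.inl rfl)
    fun b _ => czPhase_eq_one_or_neg_one (z b) (x b)

lemma sigmaZvec_sigmaZvec {n : ℕ} (z w : Fin n → Fin 2) (ψ : (Fin n → Fin 2) → ℂ) :
    sigmaZvec z (sigmaZvec w ψ) = sigmaZvec (z + w) ψ := by
  funext x
  simp only [sigmaZvec, zSign_add_left, mul_assoc]

lemma sigmaY_apply_add_one (a : Fin 2) : sigmaY a (a + 1) = Complex.I * czPhase 1 (a + 1) := by
  fin_cases a <;> simp [sigmaY, czPhase]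

lemma sigmaY_eq_zero_of_ne (a b : Fin 2) (h : b ≠ a + 1) : sigmaY a b = 0 := by
  fin_cases a <;> fin_cases b <;> simp_all [sigmaY]

/-- `σ_y^{⊗n} = iⁿ σ_x^{⊗n} σ_z^{⊗n}`, where `(σ_x^{⊗n} φ) x = φ (x + 1)`. -/
lemma sigmaYn_mulVec_apply {n : ℕ} (ψ : (Fin n → Fin 2) → ℂ) (x : Fin n → Fin 2) :
    sigmaYn.mulVec ψ x = Complex.I ^ n * sigmaZvec 1 ψ (x + 1) := by
  have h_off : ∀ y, y ≠ x + 1 → sigmaYn (I := Fin n) x y * ψ y = 0 := fun y hy => by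
    obtain ⟨k, hk⟩ := Function.ne_iff.mp hy
    simp only [sigmaYn, Matrix.of_apply]
    rw [Finset.prod_eq_zero (Finset.mem_univ k) (sigmaY_eq_zero_of_ne _ _ hk), zero_mul]
  rw [Matrix.mulVec, dotProduct, Fintype.sum_eq_single _ h_off]
  simp only [sigmaYn, Matrix.of_apply, sigmaZvec, zSign_eq_prod_czPhase, Pi.add_apply,
    Pi.one_apply, sigmaY_apply_add_one, Finset.prod_mul_distrib, Finset.prod_const,
    Finset.card_univ, Fintype.card_fin, mul_assoc]

def oddDegrees {n : ℕ} (G : SimpleGraph (Fin n)) [DecidableRel G.Adj] : Fin n → Fin 2 :=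
  fun b => if Even (G.degree b) then 0 else 1

lemma graphState_apply_add_one {n : ℕ} (G : SimpleGraph (Fin n)) [DecidableRel G.Adj]
    (x : Fin n → Fin 2) :
    graphState G (x + 1) = (-1) ^ G.edgeFinset.card *
      zSign (oddDegrees G) x * graphState G x := by
  let endPhase : Sym2 (Fin n) → ℂ :=
    Sym2.lift ⟨fun a b => czPhase 1 (x a) * czPhase 1 (x b), fun _ _ => mul_comm _ _⟩
  have h_edge (e : Sym2 (Fin n)) : czSign (x + 1) e = -1 * endPhase e * czSign x e := by
    induction e with
    | _ a b => simp only [czSign_mk, Pi.add_apply, Pi.one_apply, czPhase_add_one_add_one,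
        endPhase, Sym2.lift_mk, neg_one_mul]
  have h_ends : ∏ e ∈ G.edgeFinset, endPhase e = zSign (oddDegrees G) x := by
    rw [prod_edgeFinset_eq_prod_pow_degree G endPhase (fun v => czPhase 1 (x v))
      fun _ _ _ => rfl]
    simp only [zSign_eq_prod_czPhase, czPhase_one_left_pow, oddDegrees]
  simp only [graphState, h_edge, Finset.prod_mul_distrib, Finset.prod_const, h_ends]
  ring

theorem graph_state_sigmaY_action_general
    (n : ℕ) (H : SimpleGraph (Fin n)) [DecidableRel H.Adj]
    (z : Fin n → Fin 2) :
    ∃ c : ℂ, (c = Complex.I ^ n ∨ c = -(Complex.I ^ n)) ∧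
      sigmaYn.mulVec (sigmaZvec z (graphState H)) =
        c • sigmaZvec (fun b => z b + (if Even (H.degree b) then 1 else 0))
          (graphState H) := by
  refine ⟨Complex.I ^ n * (zSign (1 + z) 1 * (-1) ^ H.edgeFinset.card), ?_, ?_⟩
  · rcases zSign_eq_one_or_neg_one (1 + z) 1 with h | h <;>
      rcases neg_one_pow_eq_or ℂ H.edgeFinset.card with h' | h' <;> simp [h, h']
  · have h_D : (fun b => z b + if Even (H.degree b) then 1 else 0) =
        1 + z + oddDegrees H := by
      funext b
      by_cases hb : Even (H.degree b) <;>
        simp only [oddDegrees, hb, if_true, if_false, Pi.add_apply, Pi.one_apply] <;>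
        generalize z b = t <;> fin_cases t <;> rfl
    funext x
    rw [sigmaYn_mulVec_apply, sigmaZvec_sigmaZvec, Pi.smul_apply, smul_eq_mul, h_D]
    simp only [sigmaZvec, graphState_apply_add_one, zSign_add_right, zSign_add_left]
    ring

/-- For a simple graph `H` on `n` vertices with degree vector `D`
(`D_b = 1` iff `b` has even degree), and any `z ∈ F₂^V`, there is a phase `c ∈ {iⁿ, −iⁿ}`
with `σ_y^{⊗n} σ_z^z |H⟩ = c · σ_z^{z+D} |H⟩`. -/
theorem graph_state_sigmaY_action
    (n : ℕ) (hn : 0 < n) (H : SimpleGraph (Fin n)) [DecidableRel H.Adj]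
    (z : Fin n → Fin 2) :
    ∃ c : ℂ, (c = Complex.I ^ n ∨ c = -(Complex.I ^ n)) ∧
      sigmaYn.mulVec (sigmaZvec z (graphState H)) =
        c • sigmaZvec (fun b => z b + (if Even (H.degree b) then 1 else 0))
          (graphState H) :=
  graph_state_sigmaY_action_general n H z

end QIpaper
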